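/- arXiv:1007.1269 — 2 statements merged into one kernel-verified Lean document; each statement's English description precedes it below -/
import Mathlib

section
/- Let G be a finite simple graph, let 𝒫 = (X_1,…,X_d) be a path decomposition of G, and let 𝒢 be the derived graph of G and 𝒫. For every vertex u of G, the set U = {v_i(H) ∈ V(𝒢) : u ∈ V(H)} induces a connected subgraph of 𝒢. -/
open SimpleGraph

/-- A path decomposition of `G` with bags `X 0, …, X (d-1)`. -/
def IsPathDecomp {V : Type*} (G : SimpleGraph V) {d : ℕ} (X : Fin d → Finset V) : Prop :=
  (∀ v : V, ∃ i, v ∈ X i) ∧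
  (∀ u v : V, G.Adj u v → ∃ i, u ∈ X i ∧ v ∈ X i) ∧
  (∀ i j k : Fin d, i ≤ j → j ≤ k → ∀ v : V, v ∈ X i → v ∈ X k → v ∈ X j)

/-- Vertices of the derived graph: pairs `(i, H)` where `H` is a connected component of
the subgraph of `G` induced by the bag `X i`. -/
def DVert {V : Type*} (G : SimpleGraph V) {d : ℕ} (X : Fin d → Finset V) : Type _ :=
  Σ i : Fin d, (G.induce (X i : Set V)).ConnectedComponent

/-- The set `V(H) ⊆ V(G)` of vertices of the component represented by a derived vertex. -/
def dsupp {V : Type*} (G : SimpleGraph V) {d : ℕ} (X : Fin d → Finset V)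
    (x : DVert G X) : Set V :=
  {v | ∃ h : v ∈ (X x.1 : Set V),
    (G.induce (X x.1 : Set V)).connectedComponentMk ⟨v, h⟩ = x.2}

/-- The derived graph `𝒢` of `G` and the path decomposition `X`: vertices in consecutive
layers are adjacent exactly when their components share a vertex of `G`.
(Layers are numbered `1, …, d`; a vertex `x` lies in layer `x.1 + 1`.) -/
def derived {V : Type*} (G : SimpleGraph V) {d : ℕ} (X : Fin d → Finset V) :
    SimpleGraph (DVert G X) where
  Adj a b := ((a.1 : ℕ) + 1 = (b.1 : ℕ) ∨ (b.1 : ℕ) + 1 = (a.1 : ℕ)) ∧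
    (dsupp G X a ∩ dsupp G X b).Nonempty
  symm := by
    constructor
    rintro a b ⟨h1, h2⟩
    exact ⟨h1.symm, by rwa [Set.inter_comm]⟩
  loopless := by
    constructor
    rintro a ⟨h1, -⟩
    rcases h1 with h | h <;> omega

/-- The layer `V_i` of the derived graph (`1`-based: `V_i = {x | x.1 + 1 = i}`). -/
def layer {V : Type*} (G : SimpleGraph V) {d : ℕ} (X : Fin d → Finset V) (i : ℕ) :
    Set (DVert G X) :=
  {x | (x.1 : ℕ) + 1 = i}

/-- The border `δ(C)`: vertices of `C` with a neighbor outside `C`. -/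
def border {V : Type*} (G : SimpleGraph V) {d : ℕ} (X : Fin d → Finset V)
    (C : Set (DVert G X)) : Set (DVert G X) :=
  {x | x ∈ C ∧ ∃ y, (derived G X).Adj x y ∧ y ∉ C}

/-- The neighborhood `N_𝒢(S)`: vertices outside `S` adjacent to some vertex of `S`. -/
def nbhd {V : Type*} (G : SimpleGraph V) {d : ℕ} (X : Fin d → Finset V)
    (S : Set (DVert G X)) : Set (DVert G X) :=
  {u | u ∉ S ∧ ∃ x ∈ S, (derived G X).Adj u x}

/-- The weight of a set of derived vertices: `ω(S) = Σ_{x∈S} |V(H_x)|`. -/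
noncomputable def wsum {V : Type*} (G : SimpleGraph V) {d : ℕ} (X : Fin d → Finset V)
    (S : Set (DVert G X)) : ℕ :=
  ∑ᶠ x ∈ S, (dsupp G X x).ncard

/-- The right extremity `r(S)` (`1`-based); `r(∅) = 0` by convention. -/
noncomputable def rIdx {V : Type*} (G : SimpleGraph V) {d : ℕ} (X : Fin d → Finset V)
    (S : Set (DVert G X)) : ℕ :=
  sSup {n | ∃ x ∈ S, (x.1 : ℕ) + 1 = n}

/-- The left extremity `l(S)` (`1`-based); `l(∅) = d + 1` by convention. -/
noncomputable def lIdx {V : Type*} (G : SimpleGraph V) {d : ℕ} (X : Fin d → Finset V)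
    (S : Set (DVert G X)) : ℕ :=
  sInf ({n | ∃ x ∈ S, (x.1 : ℕ) + 1 = n} ∪ {d + 1})

/-- `(BL, BR)` is a border partition of `C`: disjoint sets whose union is `δ(C)`,
with `BL ⊆ V_1 ∪ … ∪ V_i` and `BR ⊆ V_{i+1} ∪ … ∪ V_d` for some `0 ≤ i ≤ d`. -/
def IsBorderPartition {V : Type*} (G : SimpleGraph V) {d : ℕ} (X : Fin d → Finset V)
    (C BL BR : Set (DVert G X)) : Prop :=
  Disjoint BL BR ∧ border G X C = BL ∪ BR ∧
    ∃ i : ℕ, i ≤ d ∧ (∀ x ∈ BL, (x.1 : ℕ) + 1 ≤ i) ∧ (∀ x ∈ BR, i + 1 ≤ (x.1 : ℕ) + 1)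

/-- `u` and `w` are connected by a progressive path of `𝒢`
(a path meeting each layer at most once). -/
def ProgConn {V : Type*} (G : SimpleGraph V) {d : ℕ} (X : Fin d → Finset V)
    (u w : DVert G X) : Prop :=
  ∃ p : (derived G X).Walk u w, ∀ a ∈ p.support, ∀ b ∈ p.support, a.1 = b.1 → a = b

/-- The vertex set of the left branch `branch_L(C, i)`: `BL` together with all
`v ∈ V_k \ C`, `i ≤ k < r(BL)`, joined by a progressive path to some `x ∈ V_j ∩ BL`, `k < j`. -/
def branchL {V : Type*} (G : SimpleGraph V) {d : ℕ} (X : Fin d → Finset V)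
    (C BL : Set (DVert G X)) (i : ℕ) : Set (DVert G X) :=
  BL ∪ {v | v ∉ C ∧ i ≤ (v.1 : ℕ) + 1 ∧ (v.1 : ℕ) + 1 < rIdx G X BL ∧
    ∃ x ∈ BL, (v.1 : ℕ) < (x.1 : ℕ) ∧ ProgConn G X v x}

/-- The vertex set of the right branch `branch_R(C, i)`: `BR` together with all
`v ∈ V_k \ C`, `l(BR) < k ≤ i`, joined by a progressive path to some `x ∈ V_j ∩ BR`, `j < k`. -/
def branchR {V : Type*} (G : SimpleGraph V) {d : ℕ} (X : Fin d → Finset V)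
    (C BR : Set (DVert G X)) (i : ℕ) : Set (DVert G X) :=
  BR ∪ {v | v ∉ C ∧ lIdx G X BR < (v.1 : ℕ) + 1 ∧ (v.1 : ℕ) + 1 ≤ i ∧
    ∃ x ∈ BR, (x.1 : ℕ) < (v.1 : ℕ) ∧ ProgConn G X v x}

/-- The external vertices of a branch with vertex set `S` (relative to `C`):
vertices of `S` with a neighbor outside `C ∪ S`. -/
def extSet {V : Type*} (G : SimpleGraph V) {d : ℕ} (X : Fin d → Finset V)
    (C S : Set (DVert G X)) : Set (DVert G X) :=
  {v | v ∈ S ∧ ∃ u, (derived G X).Adj v u ∧ u ∉ C ∪ S}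

/-- The left branch `branch_L(C, i)` is proper: no external vertices in layers `> i`. -/
def ProperL {V : Type*} (G : SimpleGraph V) {d : ℕ} (X : Fin d → Finset V)
    (C BL : Set (DVert G X)) (i : ℕ) : Prop :=
  ∀ v ∈ extSet G X C (branchL G X C BL i), (v.1 : ℕ) + 1 ≤ i

/-- The right branch `branch_R(C, i)` is proper: no external vertices in layers `< i`. -/
def ProperR {V : Type*} (G : SimpleGraph V) {d : ℕ} (X : Fin d → Finset V)
    (C BR : Set (DVert G X)) (i : ℕ) : Prop :=
  ∀ v ∈ extSet G X C (branchR G X C BR i), i ≤ (v.1 : ℕ) + 1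

/-!
The bags containing `u` form an interval of indices, each of them contributes exactly one vertex
of `U` (the component of `G[X_i]` containing `u`), and the contributions of consecutive bags are
adjacent in `𝒢` because both components contain `u`.
-/

section

variable {V : Type*} {G : SimpleGraph V} {d : ℕ} {X : Fin d → Finset V}

theorem IsPathDecomp.mem_of_le_of_le (hX : IsPathDecomp G X) {i j k : Fin d} (hij : i ≤ j)
    (hjk : j ≤ k) {v : V} (hi : v ∈ X i) (hk : v ∈ X k) : v ∈ X j :=
  hX.2.2 i j k hij hjk v hi hk

/-- The derived vertex `v_i(H)` where `H` is the component of `G[X i]` containing `v`. -/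
def DVert.ofMem (v : V) (i : Fin d) (h : v ∈ X i) : DVert G X :=
  ⟨i, (G.induce (X i : Set V)).connectedComponentMk ⟨v, h⟩⟩

open DVert

theorem mem_dsupp_ofMem {v : V} {i : Fin d} (h : v ∈ X i) : v ∈ dsupp G X (ofMem v i h) :=
  ⟨h, rfl⟩

theorem ofMem_fst_eq {v : V} {x : DVert G X} (h : v ∈ dsupp G X x) : ofMem v x.1 h.1 = x :=
  congrArg (Sigma.mk x.1) h.2

theorem derived_adj_ofMem {v : V} {i j : Fin d} (hij : (i : ℕ) + 1 = j) (hi : v ∈ X i)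
    (hj : v ∈ X j) : (derived G X).Adj (ofMem v i hi) (ofMem v j hj) :=
  ⟨Or.inl hij, v, mem_dsupp_ofMem hi, mem_dsupp_ofMem hj⟩

theorem reachable_ofMem_of_le (hX : IsPathDecomp G X) {v : V} {i j : Fin d} (hij : i ≤ j)
    (hi : v ∈ X i) (hj : v ∈ X j) :
    ((derived G X).induce {x | v ∈ dsupp G X x}).Reachable
      ⟨ofMem v i hi, mem_dsupp_ofMem hi⟩ ⟨ofMem v j hj, mem_dsupp_ofMem hj⟩ := by
  obtain ⟨j, hjd⟩ := j
  induction j, (show (i : ℕ) ≤ j from hij) using Nat.le_induction with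
  | base => rfl
  | succ k hik ih =>
    have hk : v ∈ X ⟨k, by omega⟩ :=
      hX.mem_of_le_of_le (j := ⟨k, by omega⟩) hik (Fin.mk_le_mk.2 k.le_succ) hi hj
    exact (ih (by omega) hik hk).trans
      (Adj.reachable (G := (derived G X).induce _) (derived_adj_ofMem rfl hk hj))

theorem reachable_of_fst_le (hX : IsPathDecomp G X) {v : V} {x y : DVert G X}
    (hx : v ∈ dsupp G X x) (hy : v ∈ dsupp G X y) (hxy : x.1 ≤ y.1) :
    ((derived G X).induce {x | v ∈ dsupp G X x}).Reachable ⟨x, hx⟩ ⟨y, hy⟩ := by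
  convert reachable_ofMem_of_le hX hxy hx.1 hy.1 using 2
  exacts [(ofMem_fst_eq hx).symm, (ofMem_fst_eq hy).symm]

end

theorem derived_induce_connected_general {V : Type*} (G : SimpleGraph V)
    {d : ℕ} (X : Fin d → Finset V) (hX : IsPathDecomp G X) (u : V) :
    ((derived G X).induce {x : DVert G X | u ∈ dsupp G X x}).Connected := by
  obtain ⟨i, hi⟩ := hX.1 u
  refine (connected_iff _).2 ⟨?_, ⟨⟨DVert.ofMem u i hi, mem_dsupp_ofMem hi⟩⟩⟩
  rintro ⟨x, hx⟩ ⟨y, hy⟩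
  rcases le_total x.1 y.1 with hxy | hyx
  · exact reachable_of_fst_le hX hx hy hxy
  · exact (reachable_of_fst_le hX hy hx hyx).symm

/-- For every vertex `u` of `G`, the set `U = {v_i(H) ∈ V(𝒢) : u ∈ V(H)}` induces a
connected subgraph of the derived graph `𝒢`. -/
theorem derived_induce_connected {V : Type*} [Fintype V] (G : SimpleGraph V)
    {d : ℕ} (X : Fin d → Finset V) (hX : IsPathDecomp G X) (u : V) :
    ((derived G X).induce {x : DVert G X | u ∈ dsupp G X x}).Connected :=
  derived_induce_connected_general G X hX u
end

section
/- Let G be a finite simple graph with path decomposition 𝒫 = (X_1,…,X_d), let 𝒢 be the derived graph, and let C ⊆ V(𝒢) have a border partition (B_L, B_R) with B_L ≠ ∅ and r(B_L) < l(B_R) (with the convention l(B_R) = d+1 if B_R = ∅). Set i = r(B_L), A = V_{i−1} ∩ (N_𝒢(δ(C) ∩ V_i) \ C), C′ = C ∪ A, B_L′ = (B_L ∪ A) ∩ δ(C′), and B_R′ = B_R ∩ δ(C′). Then B_L′ and B_R′ are disjoint, δ(C′) = B_L′ ∪ B_R′, and r(B_L′) < l(B_R′) (with the conventions r(B_L′)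 = 0 if B_L′ = ∅ and l(B_R′) = d+1 if B_R′ = ∅). -/
open SimpleGraph

/-!
A vertex of `C` with no neighbour outside `C` has none outside `C ∪ A` either, so
`δ(C ∪ A) ⊆ δ(C) ∪ A = B_L ∪ A ∪ B_R`. Since `A ⊆ V_{i-1}`, all of `B_L ∪ A` lies in layers
`≤ i`, while `i = r(B_L) < l(B_R)` puts `B_R` in layers `> i`; intersecting with `δ(C ∪ A)`
keeps the two sides separated by layer `i`.
-/

section

variable {V : Type*} {G : SimpleGraph V} {d : ℕ} {X : Fin d → Finset V}

theorem rIdx_le_of_forall {S : Set (DVert G X)} {n : ℕ} (h : ∀ x ∈ S, (x.1 : ℕ) + 1 ≤ n) :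
    rIdx G X S ≤ n :=
  csSup_le' <| by
    rintro _ ⟨x, hx, rfl⟩
    exact h x hx

theorem rIdx_le_card (S : Set (DVert G X)) : rIdx G X S ≤ d :=
  rIdx_le_of_forall fun x _ => x.1.isLt

theorem le_rIdx_of_mem {S : Set (DVert G X)} {x : DVert G X} (hx : x ∈ S) :
    (x.1 : ℕ) + 1 ≤ rIdx G X S :=
  le_csSup ⟨d, by rintro _ ⟨y, -, rfl⟩; exact y.1.isLt⟩ ⟨x, hx, rfl⟩

theorem lIdx_le_of_mem {S : Set (DVert G X)} {x : DVert G X} (hx : x ∈ S) :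
    lIdx G X S ≤ (x.1 : ℕ) + 1 :=
  Nat.sInf_le (Or.inl ⟨x, hx, rfl⟩)

theorem le_lIdx_of_forall {S : Set (DVert G X)} {n : ℕ} (h : ∀ x ∈ S, n ≤ (x.1 : ℕ) + 1)
    (hn : n ≤ d + 1) : n ≤ lIdx G X S :=
  le_csInf ⟨d + 1, Or.inr rfl⟩ <| by
    rintro _ (⟨x, hx, rfl⟩ | rfl)
    · exact h x hx
    · exact hn

theorem rIdx_lt_lIdx_of_separated {L R : Set (DVert G X)} {n : ℕ}
    (hL : ∀ x ∈ L, (x.1 : ℕ) + 1 ≤ n) (hR : ∀ x ∈ R, n + 1 ≤ (x.1 : ℕ) + 1) (hn : n ≤ d) :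
    rIdx G X L < lIdx G X R :=
  Nat.lt_of_le_of_lt (rIdx_le_of_forall hL) (le_lIdx_of_forall hR (by omega))

theorem disjoint_of_separated {L R : Set (DVert G X)} {n : ℕ}
    (hL : ∀ x ∈ L, (x.1 : ℕ) + 1 ≤ n) (hR : ∀ x ∈ R, n + 1 ≤ (x.1 : ℕ) + 1) :
    Disjoint L R :=
  Set.disjoint_left.mpr fun x hxL hxR => by
    have := hL x hxL
    have := hR x hxR
    omega

theorem border_union_subset (C A : Set (DVert G X)) :
    border G X (C ∪ A) ⊆ border G X C ∪ A := by
  rintro x ⟨hxC | hxA, y, hxy, hy⟩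
  · exact Or.inl ⟨hxC, y, hxy, fun hyC => hy (Or.inl hyC)⟩
  · exact Or.inr hxA

end

theorem le_step_border_partition_general {V : Type*} (G : SimpleGraph V)
    {d : ℕ} (X : Fin d → Finset V)
    (C BL BR : Set (DVert G X)) (hpart : IsBorderPartition G X C BL BR)
    (hsep : rIdx G X BL < lIdx G X BR) :
    ∀ A C' BL' BR' : Set (DVert G X),
      A = layer G X (rIdx G X BL - 1) ∩
            (nbhd G X (border G X C ∩ layer G X (rIdx G X BL)) \ C) →
      C' = C ∪ A →
      BL' = (BL ∪ A) ∩ border G X C' →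
      BR' = BR ∩ border G X C' →
      Disjoint BL' BR' ∧ border G X C' = BL' ∪ BR' ∧ rIdx G X BL' < lIdx G X BR' := by
  rintro A _ _ _ hA rfl rfl rfl
  obtain ⟨-, hborder, -⟩ := hpart
  have hleft : ∀ x ∈ (BL ∪ A) ∩ border G X (C ∪ A), (x.1 : ℕ) + 1 ≤ rIdx G X BL := by
    rintro x ⟨hx | hx, -⟩
    · exact le_rIdx_of_mem hx
    · rw [hA] at hx
      have : (x.1 : ℕ) + 1 = rIdx G X BL - 1 := hx.1
      omega
  have hright : ∀ x ∈ BR ∩ border G X (C ∪ A), rIdx G X BL + 1 ≤ (x.1 : ℕ) + 1 :=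
    fun x hx => Nat.lt_of_lt_of_le hsep (lIdx_le_of_mem hx.1)
  have hcover : border G X (C ∪ A) ⊆ (BL ∪ A) ∪ BR := by
    rw [← Set.union_right_comm, ← hborder]
    exact border_union_subset C A
  refine ⟨disjoint_of_separated hleft hright, ?_,
    rIdx_lt_lIdx_of_separated hleft hright (rIdx_le_card BL)⟩
  rw [← Set.union_inter_distrib_right, Set.inter_eq_right.mpr hcover]

/-- After one left-extension step `LE(r(BL))`, the updated pair `(BL', BR')` is again a
partition of the border of the new expansion `C' = C ∪ A`, with `r(BL') < l(BR')`
(under the conventions `r(∅) = 0` and `l(∅) = d + 1`). -/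
theorem le_step_border_partition {V : Type*} [Fintype V] (G : SimpleGraph V)
    {d : ℕ} (X : Fin d → Finset V) (hX : IsPathDecomp G X)
    (C BL BR : Set (DVert G X)) (hpart : IsBorderPartition G X C BL BR)
    (hBL : BL.Nonempty) (hsep : rIdx G X BL < lIdx G X BR) :
    ∀ A C' BL' BR' : Set (DVert G X),
      A = layer G X (rIdx G X BL - 1) ∩
            (nbhd G X (border G X C ∩ layer G X (rIdx G X BL)) \ C) →
      C' = C ∪ A →
      BL' = (BL ∪ A) ∩ border G X C' →
      BR' = BR ∩ border G X C' →
      Disjoint BL' BR' ∧ border G X C' = BL' ∪ BR' ∧ rIdx G X BL' < lIdx G X BR' :=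
  le_step_border_partition_general G X C BL BR hpart hsep
end
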